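/- Let G be a gyrogroup with a fuzzy metric (M, *) that is invariant under left gyrotranslations, i.e., M(a⊕x, a⊕y, t) = M(x,y,t) for all a,x,y ∈ G, t > 0. Define N(x,t) = M(e,x,t). Then (N, *) is a fuzzy gyronorm on G and the fuzzy metric it induces via (x,y,t) ↦ N(⊖x⊕y, t) coincides with (M, *). -/
import Mathlib


open Filter Topology

universe u

class Gyrogroup (G : Type u) where
  op : G → G → G
  e : G
  neg : G → G
  gyr : G → G → G → G
  op_left_id : ∀ x, op e x = x
  op_left_neg : ∀ x, op (neg x) x = e
  gyr_bijective : ∀ a b, Function.Bijective (gyr a b)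
  gyr_op : ∀ a b x y, gyr a b (op x y) = op (gyr a b x) (gyr a b y)
  gyrassoc : ∀ x y z, op x (op y z) = op (op x y) (gyr x y z)
  left_loop : ∀ x y, gyr (op x y) y = gyr x y

open Gyrogroup

/-- A continuous t-norm on `[0,1]`, represented as a binary operation on `ℝ`
with the t-norm axioms on `[0,1]`. -/
structure ContinuousTNorm (star : ℝ → ℝ → ℝ) : Prop where
  mem : ∀ a b, a ∈ Set.Icc (0:ℝ) 1 → b ∈ Set.Icc (0:ℝ) 1 → star a b ∈ Set.Icc (0:ℝ) 1
  comm : ∀ a b, star a b = star b a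
  assoc : ∀ a b c, star (star a b) c = star a (star b c)
  one_id : ∀ a, a ∈ Set.Icc (0:ℝ) 1 → star a 1 = a
  mono : ∀ a b c d, a ≤ c → b ≤ d → star a b ≤ star c d
  cont : ContinuousOn (fun p : ℝ × ℝ => star p.1 p.2) (Set.Icc 0 1 ×ˢ Set.Icc 0 1)

/-- A fuzzy metric in the sense of George and Veeramani. -/
structure IsFuzzyMetric {X : Type u} (M : X → X → ℝ → ℝ) (star : ℝ → ℝ → ℝ) : Prop where
  mem : ∀ x y t, 0 < t → M x y t ∈ Set.Icc (0:ℝ) 1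
  pos : ∀ x y t, 0 < t → 0 < M x y t
  eq_one_iff : ∀ x y, (∀ t, 0 < t → M x y t = 1) ↔ x = y
  symm : ∀ x y t, 0 < t → M x y t = M y x t
  tri : ∀ x y z t s, 0 < t → 0 < s → star (M x y t) (M y z s) ≤ M x z (t + s)
  cont : ∀ x y, ContinuousOn (M x y) (Set.Ioi 0)

/-- A gyronorm on a gyrogroup. -/
structure IsGyronorm {G : Type u} [Gyrogroup G] (n : G → ℝ) : Prop where
  nonneg : ∀ x, 0 ≤ n x
  eq_zero_iff : ∀ x, n x = 0 ↔ x = (Gyrogroup.e : G)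
  neg_eq : ∀ x, n (Gyrogroup.neg x) = n x
  subadd : ∀ x y, n (Gyrogroup.op x y) ≤ n x + n y
  gyr_eq : ∀ a b x, n (Gyrogroup.gyr a b x) = n x

/-- A fuzzy gyronorm on a gyrogroup. -/
structure IsFuzzyGyronorm {G : Type u} [Gyrogroup G] (N : G → ℝ → ℝ) (star : ℝ → ℝ → ℝ) : Prop where
  mem : ∀ x t, 0 < t → N x t ∈ Set.Icc (0:ℝ) 1
  pos : ∀ x t, 0 < t → 0 < N x t
  eq_one_iff : ∀ x, (∀ t, 0 < t → N x t = 1) ↔ x = (Gyrogroup.e : G)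
  neg_eq : ∀ x t, 0 < t → N (Gyrogroup.neg x) t = N x t
  subadd : ∀ x y t s, 0 < t → 0 < s → star (N x t) (N y s) ≤ N (Gyrogroup.op x y) (t + s)
  cont : ∀ x, ContinuousOn (N x) (Set.Ioi 0)
  gyr_eq : ∀ a b x t, 0 < t → N (Gyrogroup.gyr a b x) t = N x t

section GyroLemmas

variable {G : Type u} [Gyrogroup G]

lemma gyro_left_cancel (a : G) {x y : G} (h : op a x = op a y) : x = y := by
  have h1 : op (neg a) (op a x) = op (neg a) (op a y) := by rw [h]
  rw [gyrassoc, gyrassoc, op_left_neg, op_left_id, op_left_id] at h1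
  exact (gyr_bijective (neg a) a).1 h1

lemma gyro_gyr_zero_left (a : G) : ∀ x : G, gyr e a x = x := by
  intro x
  have h : op e (op a x) = op (op e a) (gyr e a x) := gyrassoc e a x
  rw [op_left_id, op_left_id] at h
  exact (gyro_left_cancel a h).symm

lemma gyro_gyr_neg_self (a : G) : ∀ x : G, gyr (neg a) a x = x := by
  intro x
  have h := left_loop (neg a) a
  rw [op_left_neg] at h
  rw [← h, gyro_gyr_zero_left]

lemma gyro_neg_op_op (a x : G) : op (neg a) (op a x) = x := by
  rw [gyrassoc, op_left_neg, op_left_id, gyro_gyr_neg_self]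

lemma gyro_op_right_id (a : G) : op a e = a := by
  apply gyro_left_cancel (neg a)
  rw [gyro_neg_op_op, op_left_neg]

lemma gyro_op_right_neg (a : G) : op a (neg a) = e := by
  apply gyro_left_cancel (neg a)
  rw [gyro_neg_op_op, gyro_op_right_id]

lemma gyro_gyr_self_neg (a : G) : ∀ x : G, gyr a (neg a) x = x := by
  intro x
  have h := left_loop a (neg a)
  rw [gyro_op_right_neg] at h
  rw [← h, gyro_gyr_zero_left]

lemma gyro_op_neg_op (a x : G) : op a (op (neg a) x) = x := by
  rw [gyrassoc, gyro_op_right_neg, op_left_id, gyro_gyr_self_neg]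

lemma gyro_gyr_eq (a b x : G) :
    gyr a b x = op (neg (op a b)) (op a (op b x)) := by
  rw [gyrassoc a b x, gyro_neg_op_op]

end GyroLemmas

theorem left_invariant_fuzzy_metric_gives_gyronorm {G : Type u} [Gyrogroup G]
    (M : G → G → ℝ → ℝ) (star : ℝ → ℝ → ℝ)
    (hstar : ContinuousTNorm star) (hM : IsFuzzyMetric M star)
    (hinv : ∀ a x y : G, ∀ t : ℝ, 0 < t → M (op a x) (op a y) t = M x y t) :
    IsFuzzyGyronorm (fun x t => M e x t) star ∧
    (∀ x y : G, ∀ t : ℝ, 0 < t → M e (op (neg x) y) t = M x y t) := by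
  have key : ∀ x y : G, ∀ t : ℝ, 0 < t → M e (op (neg x) y) t = M x y t := by
    intro x y t ht
    have h := hinv x e (op (neg x) y) t ht
    rw [gyro_op_right_id, gyro_op_neg_op] at h
    exact h.symm
  refine ⟨?_, key⟩
  constructor
  · intro x t ht; exact hM.mem e x t ht
  · intro x t ht; exact hM.pos e x t ht
  · intro x
    rw [hM.eq_one_iff e x, eq_comm]
  · intro x t ht
    have h := hinv x e (neg x) t ht
    rw [gyro_op_right_id, gyro_op_right_neg] at h
    rw [h.symm, hM.symm x e t ht]
  · intro x y t s ht hs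
    have h := hinv x e y s hs
    rw [gyro_op_right_id] at h
    calc star (M e x t) (M e y s) = star (M e x t) (M x (op x y) s) := by rw [← h]
      _ ≤ M e (op x y) (t + s) := hM.tri e x (op x y) t s ht hs
  · intro x; exact hM.cont e x
  · intro a b x t ht
    rw [gyro_gyr_eq, key (op a b) (op a (op b x)) t ht, hinv a b (op b x) t ht]
    have h := hinv b e x t ht
    rwa [gyro_op_right_id] at h
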